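/- Let Σ₀ be a c×c real symmetric positive semidefinite matrix with τ = Tr(Σ₀)/c. Then there exists an orthogonal matrix R, expressible as a product of at most c−1 Givens rotations, such that all diagonal entries of R Σ₀ Rᵀ equal τ. -/
import Mathlib


open Matrix

noncomputable def givens (c : ℕ) (i j : Fin c) (θ : ℝ) : Matrix (Fin c) (Fin c) ℝ :=
  fun k l =>
    if k = l then (if k = i ∨ k = j then Real.cos θ else 1)
    else if k = i ∧ l = j then Real.sin θ
    else if k = j ∧ l = i then -Real.sin θ
    else 0

lemma givens_row_sum {c : ℕ} {i j : Fin c} (hij : i ≠ j) (θ : ℝ) (k : Fin c) (f : Fin c → ℝ) :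
    ∑ a, givens c i j θ k a * f a =
      if k = i then Real.cos θ * f i + Real.sin θ * f j
      else if k = j then -Real.sin θ * f i + Real.cos θ * f j
      else f k := by
  have key : ∀ a, givens c i j θ k a * f a =
      (if a = k then (if k = i ∨ k = j then Real.cos θ else 1) * f k else 0)
      + (if a = j then (if k = i then Real.sin θ else 0) * f j else 0)
      + (if a = i then (if k = j then -Real.sin θ else 0) * f i else 0) := by
    intro a
    unfold givens
    by_cases hak : a = k <;> by_cases hai : a = i <;> by_cases haj : a = j <;>
      subst_vars <;> simp_all <;> ring_nf <;> simp_all [eq_comm]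
  simp only [key, Finset.sum_add_distrib, Finset.sum_ite_eq', Finset.mem_univ, if_true]
  by_cases hki : k = i <;> by_cases hkj : k = j <;> subst_vars <;> simp_all <;> ring

lemma givens_mul_apply {c : ℕ} {i j : Fin c} (hij : i ≠ j) (θ : ℝ)
    (M : Matrix (Fin c) (Fin c) ℝ) (k l : Fin c) :
    (givens c i j θ * M) k l =
      if k = i then Real.cos θ * M i l + Real.sin θ * M j l
      else if k = j then -Real.sin θ * M i l + Real.cos θ * M j l
      else M k l := by
  rw [mul_apply, givens_row_sum hij]

lemma mul_givens_transpose_apply {c : ℕ} {i j : Fin c} (hij : i ≠ j) (θ : ℝ)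
    (M : Matrix (Fin c) (Fin c) ℝ) (k l : Fin c) :
    (M * (givens c i j θ)ᵀ) k l =
      if l = i then Real.cos θ * M k i + Real.sin θ * M k j
      else if l = j then -Real.sin θ * M k i + Real.cos θ * M k j
      else M k l := by
  rw [mul_apply]
  simp only [transpose_apply]
  have h : ∑ x, M k x * givens c i j θ l x = ∑ x, givens c i j θ l x * M k x := by
    exact Finset.sum_congr rfl fun x _ => mul_comm _ _
  rw [h, givens_row_sum hij]

lemma givens_orth {c : ℕ} {i j : Fin c} (hij : i ≠ j) (θ : ℝ) :
    givens c i j θ * (givens c i j θ)ᵀ = 1 := by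
  ext k l
  rw [mul_givens_transpose_apply hij]
  unfold givens
  by_cases hki : k = i <;> by_cases hkj : k = j <;> by_cases hli : l = i <;> by_cases hlj : l = j <;>
    subst_vars <;>
    simp_all [one_apply, eq_comm, Real.sin_sq_add_cos_sq, Real.cos_sq_add_sin_sq] <;> ring_nf <;>
    simp [Real.sin_sq_add_cos_sq, Real.cos_sq_add_sin_sq]

lemma conj_diag {c : ℕ} {i j : Fin c} (hij : i ≠ j) (θ : ℝ)
    (S : Matrix (Fin c) (Fin c) ℝ) (hsym : S j i = S i j) (k : Fin c) :
    (givens c i j θ * S * (givens c i j θ)ᵀ) k k =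
      if k = i then
        Real.cos θ ^ 2 * S i i + 2 * Real.sin θ * Real.cos θ * S i j + Real.sin θ ^ 2 * S j j
      else if k = j then
        Real.sin θ ^ 2 * S i i - 2 * Real.sin θ * Real.cos θ * S i j + Real.cos θ ^ 2 * S j j
      else S k k := by
  rw [mul_givens_transpose_apply hij]
  simp only [givens_mul_apply hij]
  by_cases hki : k = i <;> by_cases hkj : k = j <;> subst_vars <;> simp_all <;> ring

lemma conj_symm {c : ℕ} (G S : Matrix (Fin c) (Fin c) ℝ) (hsym : S.IsSymm) :
    (G * S * Gᵀ).IsSymm := by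
  unfold Matrix.IsSymm at *
  rw [transpose_mul, transpose_mul, transpose_transpose, hsym, mul_assoc]

lemma main_induction (c : ℕ) (τ : ℝ) : ∀ m : ℕ, ∀ s : Finset (Fin c), s.card = m →
    ∀ S : Matrix (Fin c) (Fin c) ℝ, S.IsSymm → (∑ k ∈ s, S k k) = m * τ →
    (∀ k ∉ s, S k k = τ) →
    ∃ L : List (Matrix (Fin c) (Fin c) ℝ),
      L.length ≤ m - 1 ∧
      (∀ G ∈ L, ∃ (i j : Fin c) (θ : ℝ), i ≠ j ∧ G = givens c i j θ) ∧
      (L.prod * (L.prod)ᵀ = 1) ∧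
      ∀ k : Fin c, (L.prod * S * (L.prod)ᵀ) k k = τ := by
  intro m
  induction m with
  | zero =>
    intro s hs S _ _ hout
    refine ⟨[], by simp, by simp, by simp, ?_⟩
    intro k
    simp only [List.prod_nil, Matrix.one_mul, Matrix.transpose_one, Matrix.mul_one]
    exact hout k (by simp [Finset.card_eq_zero.mp hs])
  | succ m IH =>
    intro s hs S hsym hsum hout
    by_cases hall : ∀ k ∈ s, S k k = τ
    · refine ⟨[], by simp, by simp, by simp, ?_⟩
      intro k
      simp only [List.prod_nil, Matrix.one_mul, Matrix.transpose_one, Matrix.mul_one]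
      by_cases hk : k ∈ s
      · exact hall k hk
      · exact hout k hk
    · push_neg at hall
      obtain ⟨i0, hi0s, hi0⟩ := hall
      -- find p with S p p < τ and q with S q q > τ
      have hlt : ∃ p ∈ s, S p p < τ := by
        by_contra h
        push_neg at h
        have hc : ∑ k ∈ s, τ = ((m:ℝ)+1) * τ := by
          rw [Finset.sum_const, hs, nsmul_eq_mul]; push_cast; ring
        have hlt2 : ∑ k ∈ s, τ < ∑ k ∈ s, S k k :=
          Finset.sum_lt_sum (fun k hk => h k hk) ⟨i0, hi0s, lt_of_le_of_ne (h i0 hi0s) (Ne.symm hi0)⟩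
        rw [hsum, hc] at hlt2
        push_cast at hlt2
        linarith
      have hgt : ∃ q ∈ s, τ < S q q := by
        by_contra h
        push_neg at h
        obtain ⟨p, hps, hp⟩ := hlt
        have hlt2 : ∑ k ∈ s, S k k < ∑ k ∈ s, τ :=
          Finset.sum_lt_sum (fun k hk => h k hk) ⟨p, hps, hp⟩
        rw [hsum, Finset.sum_const, hs, nsmul_eq_mul] at hlt2
        push_cast at hlt2
        linarith
      obtain ⟨p, hps, hp⟩ := hlt
      obtain ⟨q, hqs, hq⟩ := hgt
      have hpq : p ≠ q := fun h => by rw [h] at hp; linarith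
      -- IVT
      set f : ℝ → ℝ := fun θ =>
        Real.cos θ ^ 2 * S p p + 2 * Real.sin θ * Real.cos θ * S p q + Real.sin θ ^ 2 * S q q with hf
      have hcont : Continuous f := by fun_prop
      have hf0 : f 0 = S p p := by simp [hf]
      have hfpi : f (Real.pi / 2) = S q q := by simp [hf]
      have : τ ∈ Set.Icc (f 0) (f (Real.pi / 2)) := by
        rw [hf0, hfpi]; exact ⟨le_of_lt hp, le_of_lt hq⟩
      obtain ⟨θ, _, hθ⟩ := intermediate_value_Icc (by positivity : (0:ℝ) ≤ Real.pi/2)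
        hcont.continuousOn this
      set G := givens c p q θ with hG
      set S' := G * S * Gᵀ with hS'
      have hsymS' : S'.IsSymm := conj_symm G S hsym
      have hSqp : S q p = S p q := by
        conv_lhs => rw [← hsym]
        rfl
      have hdiag := conj_diag hpq θ S hSqp
      have hS'pp : S' p p = τ := by rw [hS', hdiag p, if_pos rfl]; exact hθ
      have hS'qq : S' q q = S p p + S q q - τ := by
        rw [hS', hdiag q, if_neg (Ne.symm hpq), if_pos rfl]
        have h1 : Real.sin θ ^ 2 = 1 - Real.cos θ ^ 2 := by
          have := Real.sin_sq_add_cos_sq θ; linarith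
        have hθ' : Real.cos θ ^ 2 * S p p + 2 * Real.sin θ * Real.cos θ * S p q
            + Real.sin θ ^ 2 * S q q = τ := hθ
        linear_combination (-1) * hθ' + (S p p + S q q) * h1
      have hS'kk : ∀ k, k ≠ p → k ≠ q → S' k k = S k k := by
        intro k hkp hkq
        rw [hS', hdiag k, if_neg hkp, if_neg hkq]
      -- new set
      set s' := s.erase p with hs'
      have hqs' : q ∈ s' := Finset.mem_erase.mpr ⟨Ne.symm hpq, hqs⟩
      have hcard : s'.card = m := by
        rw [hs', Finset.card_erase_of_mem hps, hs]
        omega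
      have hsum' : (∑ k ∈ s', S' k k) = m * τ := by
        have e1 : ∑ k ∈ s, S' k k = S' p p + ∑ k ∈ s', S' k k :=
          (Finset.add_sum_erase s _ hps).symm
        have e2 : ∑ k ∈ s', S' k k = S' q q + ∑ k ∈ s'.erase q, S' k k :=
          (Finset.add_sum_erase s' _ hqs').symm
        have e3 : ∑ k ∈ s, S k k = S p p + (S q q + ∑ k ∈ s'.erase q, S k k) := by
          rw [Finset.add_sum_erase s' (fun k => S k k) hqs', hs',
            Finset.add_sum_erase s (fun k => S k k) hps]
        have e4 : ∑ k ∈ s'.erase q, S' k k = ∑ k ∈ s'.erase q, S k k := by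
          refine Finset.sum_congr rfl fun k hk => ?_
          have hk1 : k ≠ q := (Finset.mem_erase.mp hk).1
          have hk2 : k ≠ p := (Finset.mem_erase.mp ((Finset.mem_erase.mp hk).2)).1
          exact hS'kk k hk2 hk1
        have := hsum
        rw [e3] at this
        rw [e2, e4, hS'pp, hS'qq] at *
        push_cast at *
        linarith
      have hout' : ∀ k ∉ s', S' k k = τ := by
        intro k hk
        by_cases hkp : k = p
        · rw [hkp]; exact hS'pp
        · have hks : k ∉ s := fun h => hk (Finset.mem_erase.mpr ⟨hkp, h⟩)
          have hkq : k ≠ q := fun h => hks (h ▸ hqs)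
          rw [hS'kk k hkp hkq]
          exact hout k hks
      obtain ⟨L', hlen, hmem, horth, hdiag'⟩ := IH s' hcard S' hsymS' hsum' hout'
      refine ⟨L' ++ [G], ?_, ?_, ?_, ?_⟩
      · have hm1 : 1 ≤ m := by
          by_contra h
          push_neg at h
          interval_cases m
          · have : s.card = 1 := hs
            have := Finset.card_le_one.mp (le_of_eq this)
            exact hpq (this p hps q hqs)
        simp only [List.length_append, List.length_singleton]
        omega
      · intro X hX
        rcases List.mem_append.mp hX with h | h
        · exact hmem X h
        · rw [List.mem_singleton.mp h]
          exact ⟨p, q, θ, hpq, rfl⟩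
      · rw [List.prod_append, List.prod_singleton, transpose_mul, ← mul_assoc,
          mul_assoc L'.prod _ _, givens_orth hpq, mul_one, horth]
      · intro k
        rw [List.prod_append, List.prod_singleton, transpose_mul]
        have : L'.prod * G * S * (Gᵀ * L'.prodᵀ) = L'.prod * S' * L'.prodᵀ := by
          rw [hS']; simp only [Matrix.mul_assoc]
        rw [this]
        exact hdiag' k

theorem stmt13 (c : ℕ) (S0 : Matrix (Fin c) (Fin c) ℝ) (hS : S0.PosSemidef)
    (τ : ℝ) (hτ : τ = S0.trace / c) :
    ∃ L : List (Matrix (Fin c) (Fin c) ℝ),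
      L.length ≤ c - 1 ∧
      (∀ G ∈ L, ∃ (i j : Fin c) (θ : ℝ), i ≠ j ∧ G = givens c i j θ) ∧
      (L.prod * (L.prod)ᵀ = 1) ∧
      ∀ k : Fin c, (L.prod * S0 * (L.prod)ᵀ) k k = τ := by
  have hsym : S0.IsSymm := by
    have := hS.1
    rwa [Matrix.IsHermitian, Matrix.conjTranspose_eq_transpose_of_trivial] at this
  have hsum : (∑ k ∈ (Finset.univ : Finset (Fin c)), S0 k k) = (c : ℝ) * τ := by
    rcases Nat.eq_zero_or_pos c with hc | hc
    · subst hc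
      simp
    · have hc' : (c : ℝ) ≠ 0 := Nat.cast_ne_zero.mpr hc.ne'
      rw [hτ]
      field_simp
      rfl
  obtain ⟨L, h1, h2, h3, h4⟩ := main_induction c τ c Finset.univ (by simp) S0 hsym hsum
    (by simp)
  exact ⟨L, h1, h2, h3, h4⟩
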